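/- Subtour-elimination LP integrality gap for multi-depot TSP: for every δ > 0 there exists a metric MDMTSP instance (G, D, w) (the instance of Figure 2, with two depots joined by two parallel paths of length ℓ through non-depot vertices, all unit edge weights, shortest-path metric) such that the optimum of the multi-depot subtour-elimination LP — minimize Σ w_e x_e subject to Σ_{e ∈ δ(v)} x_e = 2 for all non-depot v, Σ_{e ∈ δ(U)} x_e ≥ 2 for all U ⊆ V \ D, and x_e ∈ [0,2] — is at most ℓ + 6 while every integral tour has weight at least 2(ℓ + 4); hence the integrality gap is at least 2(ℓ+4)/(ℓ+6), which tends to 2. -/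

import Mathlib

open scoped Classical

noncomputable def deg {V : Type*} (E : Multiset (Sym2 V)) (v : V) : ℕ :=
  (E.filter (fun e => v ∈ e)).card

def Connects {V : Type*} (E : Multiset (Sym2 V)) : V → V → Prop :=
  Relation.ReflTransGen (fun a b => s(a, b) ∈ E)

noncomputable def mweight {V : Type*} (w : Sym2 V → ℝ) (E : Multiset (Sym2 V)) : ℝ :=
  (E.map w).sum

def IsMetric {V : Type*} (w : Sym2 V → ℝ) : Prop :=
  (∀ e, 0 ≤ w e) ∧ ∀ a b c : V, w s(a, c) ≤ w s(a, b) + w s(b, c)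

def IsTour {V : Type*} (D : Finset V) (T : Multiset (Sym2 V)) : Prop :=
  (∀ e ∈ T, ¬ Sym2.IsDiag e) ∧ (∀ v, Even (deg T v)) ∧ ∀ v, ∃ d ∈ D, Connects T v d

def IsCSF {V : Type*} (D : Finset V) (F : Finset (Sym2 V)) : Prop :=
  (∀ e ∈ F, ¬ Sym2.IsDiag e) ∧
  (SimpleGraph.fromEdgeSet (↑F : Set (Sym2 V))).IsAcyclic ∧
  ∀ v, ∃ d ∈ D, Connects F.val v d

def IsPM {V : Type*} (U : Finset V) (M : Multiset (Sym2 V)) : Prop :=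
  (∀ e ∈ M, ¬ Sym2.IsDiag e) ∧ ∀ v, deg M v = if v ∈ U then 1 else 0

def IsRPPSol {V : Type*} (R J : Multiset (Sym2 V)) : Prop :=
  (∀ e ∈ J, ¬ Sym2.IsDiag e) ∧ (∀ v, Even (deg (R + J) v)) ∧
  ∀ u v : V, (∃ e ∈ R + J, u ∈ e) → (∃ e ∈ R + J, v ∈ e) → Connects (R + J) u v

/-! ### Auxiliary definitions: the path instance -/

noncomputable def wf (n : ℕ) : Sym2 (Fin n) → ℝ :=
  Sym2.lift ⟨fun i j => |(i : ℝ) - (j : ℝ)|, fun i j => by simp [abs_sub_comm]⟩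

noncomputable def xf (n : ℕ) : Sym2 (Fin n) → ℝ :=
  Sym2.lift ⟨fun i j => if (i:ℕ)+1 = (j:ℕ) ∨ (j:ℕ)+1 = (i:ℕ) then 1 else 0,
    fun i j => by simp [or_comm]⟩

def crossP (n c : ℕ) (e : Sym2 (Fin n)) : Prop :=
  (∃ a ∈ e, (a:ℕ) ≤ c) ∧ (∃ b ∈ e, c < (b:ℕ))

lemma wf_mk {n : ℕ} (i j : Fin n) : wf n s(i,j) = |(i:ℝ) - (j:ℝ)| := by simp [wf]

lemma xf_mk {n : ℕ} (i j : Fin n) :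
    xf n s(i,j) = if (i:ℕ)+1 = (j:ℕ) ∨ (j:ℕ)+1 = (i:ℕ) then 1 else 0 := by simp [xf]

lemma wf_metric (n : ℕ) : IsMetric (wf n) := by
  constructor
  · intro e
    induction e using Sym2.inductionOn with
    | hf i j => simp [wf, abs_nonneg]
  · intro a b c
    simp only [wf, Sym2.lift_mk]
    exact abs_sub_le _ _ _

lemma xf_nonneg (n : ℕ) (e : Sym2 (Fin n)) : 0 ≤ xf n e := by
  induction e using Sym2.inductionOn with
  | hf i j => simp only [xf, Sym2.lift_mk]; positivity

lemma xf_le (n : ℕ) (e : Sym2 (Fin n)) : xf n e ≤ 2 := by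
  induction e using Sym2.inductionOn with
  | hf i j => simp only [xf, Sym2.lift_mk]; split <;> norm_num

/-! ### Multiset summation helpers -/

lemma sum_map_finsum {α β : Type*} (T : Multiset α) (F : Finset β) (g : β → α → ℝ) :
    (T.map fun e => ∑ c ∈ F, g c e).sum = ∑ c ∈ F, (T.map (g c)).sum := by
  induction T using Multiset.induction_on with
  | empty => simp
  | cons a s ih => simp [ih, Finset.sum_add_distrib]

lemma sum_map_ite {α : Type*} (T : Multiset α) (P : α → Prop) [DecidablePred P] :
    (T.map (fun e => if P e then (1:ℝ) else 0)).sum = ((T.filter P).card : ℝ) := by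
  induction T using Multiset.induction_on with
  | empty => simp
  | cons a s ih => by_cases h : P a <;> simp [Multiset.filter_cons, h, ih, add_comm]

lemma sum_map_ite_nat {α : Type*} (T : Multiset α) (P : α → Prop) [DecidablePred P] :
    (T.map (fun e => if P e then (1:ℕ) else 0)).sum = (T.filter P).card := by
  induction T using Multiset.induction_on with
  | empty => simp
  | cons a s ih => by_cases h : P a <;> simp [Multiset.filter_cons, h, ih, add_comm]

lemma sum_map_finsum_nat {α β : Type*} (T : Multiset α) (F : Finset β) (g : β → α → ℕ) :
    (T.map fun e => ∑ c ∈ F, g c e).sum = ∑ c ∈ F, (T.map (g c)).sum := by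
  induction T using Multiset.induction_on with
  | empty => simp
  | cons a s ih => simp [ih, Finset.sum_add_distrib]

lemma sum_mod_two {α : Type*} (T : Multiset α) (f g : α → ℕ)
    (h : ∀ e ∈ T, f e % 2 = g e % 2) :
    (T.map f).sum % 2 = (T.map g).sum % 2 := by
  induction T using Multiset.induction_on with
  | empty => simp
  | cons a s ih =>
    simp only [Multiset.map_cons, Multiset.sum_cons]
    have h1 := h a (Multiset.mem_cons_self a s)
    have h2 := ih (fun e he => h e (Multiset.mem_cons_of_mem he))
    omega

/-! ### Crossing edges -/

lemma crossP_iff {n : ℕ} (c : ℕ) (a b : Fin n) :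
    crossP n c s(a,b) ↔ ((a:ℕ) ≤ c ∨ (b:ℕ) ≤ c) ∧ (c < (a:ℕ) ∨ c < (b:ℕ)) := by
  constructor
  · rintro ⟨⟨x, hx, h1⟩, ⟨y, hy, h2⟩⟩
    rw [Sym2.mem_iff] at hx hy
    constructor
    · rcases hx with rfl | rfl <;> tauto
    · rcases hy with rfl | rfl <;> tauto
  · rintro ⟨h1, h2⟩
    exact ⟨by rcases h1 with h|h; exacts [⟨a, Sym2.mem_mk_left _ _, h⟩, ⟨b, Sym2.mem_mk_right _ _, h⟩],
           by rcases h2 with h|h; exacts [⟨a, Sym2.mem_mk_left _ _, h⟩, ⟨b, Sym2.mem_mk_right _ _, h⟩]⟩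

lemma connects_symm {V : Type*} (E : Multiset (Sym2 V)) {u v : V}
    (h : Connects E u v) : Connects E v u := by
  have hs : Std.Symm (fun a b : V => s(a, b) ∈ E) := ⟨fun a b hab => by rwa [Sym2.eq_swap] at hab⟩
  exact (Relation.ReflTransGen.stdSymm (r := fun a b : V => s(a, b) ∈ E)).symm _ _ h

lemma cross_of_connects {n : ℕ} (T : Multiset (Sym2 (Fin n))) {u v : Fin n} {c : ℕ}
    (h : Connects T u v) (hu : (u:ℕ) ≤ c) (hv : c < (v:ℕ)) :
    ∃ e ∈ T, crossP n c e := by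
  induction h with
  | refl => omega
  | tail hub step ih =>
    rename_i b v'
    by_cases hb : (b:ℕ) ≤ c
    · exact ⟨s(b, v'), step, ⟨b, Sym2.mem_mk_left _ _, hb⟩, ⟨v', Sym2.mem_mk_right _ _, hv⟩⟩
    · exact ih (by omega)

lemma cnt_card {n : ℕ} (c : ℕ) (a b : Fin n) (hab : a ≠ b) :
    ((Finset.univ.filter (fun v : Fin n => (v:ℕ) ≤ c)).filter (fun v => v ∈ s(a,b))).card
      = (if (a:ℕ) ≤ c then 1 else 0) + (if (b:ℕ) ≤ c then 1 else 0) := by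
  have hmem : ∀ v : Fin n, (v ∈ s(a,b)) = (v = a ∨ v = b) := by
    intro v; simp [Sym2.mem_iff]
  simp only [hmem]
  rw [Finset.filter_or, Finset.filter_eq', Finset.filter_eq',
    Finset.card_union_of_disjoint]
  · by_cases ha : (a:ℕ) ≤ c <;> by_cases hb : (b:ℕ) ≤ c <;>
      simp [ha, hb, Finset.mem_filter]
  · by_cases ha : (a:ℕ) ≤ c <;> by_cases hb : (b:ℕ) ≤ c <;>
      simp [ha, hb, Finset.disjoint_singleton_left, hab, Ne.symm hab, Finset.mem_filter]

lemma cross_even {n : ℕ} (T : Multiset (Sym2 (Fin n))) (hd : ∀ e ∈ T, ¬ e.IsDiag)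
    (hdeg : ∀ v, Even (deg T v)) (c : ℕ) :
    Even (T.filter (crossP n c)).card := by
  set S : Finset (Fin n) := Finset.univ.filter (fun v => (v:ℕ) ≤ c) with hS
  have key : ∑ v ∈ S, deg T v = (T.map (fun e => (S.filter (fun v => v ∈ e)).card)).sum := by
    have h1 : ∀ v, deg T v = (T.map (fun e => if v ∈ e then (1:ℕ) else 0)).sum := by
      intro v; rw [sum_map_ite_nat]; unfold deg; congr!
    calc ∑ v ∈ S, deg T v
        = ∑ v ∈ S, (T.map (fun e => if v ∈ e then (1:ℕ) else 0)).sum := by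
          simp only [h1]
      _ = (T.map (fun e => ∑ v ∈ S, if v ∈ e then (1:ℕ) else 0)).sum := by
          rw [sum_map_finsum_nat]
      _ = _ := by
          congr 1; apply Multiset.map_congr rfl
          intro e _; rw [Finset.card_filter]
  have heven : Even (∑ v ∈ S, deg T v) := by
    rw [Nat.even_iff] at *
    rw [Finset.sum_nat_mod]
    have : ∀ v ∈ S, deg T v % 2 = 0 := fun v _ => Nat.even_iff.mp (hdeg v)
    rw [Finset.sum_congr rfl this]
    simp
  have hcong : (T.map (fun e => (S.filter (fun v => v ∈ e)).card)).sum % 2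
      = (T.map (fun e => if crossP n c e then (1:ℕ) else 0)).sum % 2 := by
    apply sum_mod_two
    intro e he
    induction e using Sym2.inductionOn with
    | hf a b =>
      have hab : a ≠ b := by
        intro h; exact hd _ he (by simp [h, Sym2.mk_isDiag_iff])
      rw [cnt_card c a b hab, crossP_iff]
      by_cases ha : (a:ℕ) ≤ c <;> by_cases hb : (b:ℕ) ≤ c
      · simp [ha, hb, not_lt.mpr ha, not_lt.mpr hb]
      · simp [ha, hb, not_lt.mpr ha, not_le.mp hb]
      · simp [ha, hb, not_le.mp ha, not_lt.mpr hb]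
      · simp [ha, hb, not_le.mp ha, not_le.mp hb]
  rw [Nat.even_iff] at heven ⊢
  rw [← sum_map_ite_nat, ← hcong, ← key]
  exact heven

/-! ### Weight decomposition over cuts -/

lemma wf_decomp_lt {n : ℕ} (a b : Fin n) (h : (a:ℕ) < (b:ℕ)) :
    wf n s(a,b) = ∑ c ∈ Finset.range (n-1), (if crossP n c s(a,b) then (1:ℝ) else 0) := by
  rw [Finset.sum_boole]
  have hfil : (Finset.range (n-1)).filter (fun c => crossP n c s(a,b))
      = Finset.Ico (a:ℕ) (b:ℕ) := by
    ext c
    simp only [Finset.mem_filter, Finset.mem_range, Finset.mem_Ico, crossP_iff]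
    have hb := b.isLt
    omega
  rw [hfil, Nat.card_Ico]
  simp only [wf, Sym2.lift_mk]
  rw [abs_sub_comm, abs_of_nonneg (by simp [Nat.cast_le, h.le] : (0:ℝ) ≤ (b:ℕ) - (a:ℕ))]
  push_cast [h.le]
  ring

lemma wf_decomp {n : ℕ} (e : Sym2 (Fin n)) (hd : ¬ e.IsDiag) :
    wf n e = ∑ c ∈ Finset.range (n-1), (if crossP n c e then (1:ℝ) else 0) := by
  induction e using Sym2.inductionOn with
  | hf a b =>
    have hab : (a:ℕ) ≠ (b:ℕ) := by
      intro h; exact hd (by simp [Sym2.mk_isDiag_iff, Fin.ext_iff, h])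
    rcases Nat.lt_or_ge (a:ℕ) (b:ℕ) with h | h
    · exact wf_decomp_lt a b h
    · rw [Sym2.eq_swap]; exact wf_decomp_lt b a (by omega)

lemma mweight_eq {n : ℕ} (T : Multiset (Sym2 (Fin n))) (hd : ∀ e ∈ T, ¬ e.IsDiag) :
    mweight (wf n) T = ∑ c ∈ Finset.range (n-1), ((T.filter (crossP n c)).card : ℝ) := by
  unfold mweight
  rw [Multiset.map_congr rfl (fun e he => wf_decomp e (hd e he)), sum_map_finsum]
  exact Finset.sum_congr rfl fun c _ => sum_map_ite T (crossP n c)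

/-! ### LP feasibility and value -/

lemma deg_sum {n : ℕ} (v : Fin n) (h1 : 1 ≤ (v:ℕ)) (h2 : (v:ℕ) + 1 < n) :
    ∑ u ∈ Finset.univ.erase v, xf n s(v,u) = 2 := by
  have hx : ∀ u : Fin n, xf n s(v,u)
      = if ((v:ℕ)+1 = (u:ℕ) ∨ (u:ℕ)+1 = (v:ℕ)) then (1:ℝ) else 0 := fun u => xf_mk v u
  rw [Finset.sum_congr rfl (fun u _ => hx u), Finset.sum_boole]
  have hvn := v.isLt
  set vm : Fin n := ⟨(v:ℕ) - 1, by omega⟩ with hvm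
  set vp : Fin n := ⟨(v:ℕ) + 1, by omega⟩ with hvp
  have hfil : (Finset.univ.erase v).filter
      (fun u : Fin n => (v:ℕ)+1 = (u:ℕ) ∨ (u:ℕ)+1 = (v:ℕ)) = {vm, vp} := by
    ext u
    simp only [Finset.mem_filter, Finset.mem_erase, Finset.mem_univ, true_and,
      Finset.mem_insert, Finset.mem_singleton, Ne, Fin.ext_iff, hvm, hvp, and_true]
    omega
  rw [hfil]
  have hne : vm ≠ vp := by
    simp only [Ne, Fin.ext_iff, hvm, hvp]; omega
  rw [Finset.card_insert_of_notMem (by simpa using hne), Finset.card_singleton]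
  norm_num

lemma cut_bound {n : ℕ} (U : Finset (Fin n)) (hne : U.Nonempty)
    (hU : ∀ u ∈ U, 1 ≤ (u:ℕ) ∧ (u:ℕ) + 1 < n) :
    2 ≤ ∑ u ∈ U, ∑ v ∈ Finset.univ \ U, xf n s(u,v) := by
  have hgn : ∀ u : Fin n, (0:ℝ) ≤ ∑ v ∈ Finset.univ \ U, xf n s(u,v) := fun u =>
    Finset.sum_nonneg fun v _ => xf_nonneg n _
  set a : Fin n := U.min' hne with hadef
  set b : Fin n := U.max' hne with hbdef
  have haU : a ∈ U := U.min'_mem hne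
  have hbU : b ∈ U := U.max'_mem hne
  obtain ⟨ha1, ha2⟩ := hU a haU
  obtain ⟨hb1, hb2⟩ := hU b hbU
  set am : Fin n := ⟨(a:ℕ) - 1, by omega⟩ with ham
  set bp : Fin n := ⟨(b:ℕ) + 1, by omega⟩ with hbp
  have hamU : am ∉ U := by
    intro h
    have := U.min'_le am h
    rw [← hadef, Fin.le_def] at this
    simp only [ham] at this
    omega
  have hbpU : bp ∉ U := by
    intro h
    have := U.le_max' bp h
    rw [← hbdef, Fin.le_def] at this
    simp only [hbp] at this
    omega
  have hamM : am ∈ Finset.univ \ U := Finset.mem_sdiff.mpr ⟨Finset.mem_univ _, hamU⟩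
  have hbpM : bp ∈ Finset.univ \ U := Finset.mem_sdiff.mpr ⟨Finset.mem_univ _, hbpU⟩
  have hxa : xf n s(a, am) = 1 := by
    rw [xf_mk, if_pos]
    right; simp only [ham]; omega
  have hxb : xf n s(b, bp) = 1 := by
    rw [xf_mk, if_pos]
    left; simp only [hbp]
  have hga : (1:ℝ) ≤ ∑ v ∈ Finset.univ \ U, xf n s(a,v) := by
    have h := Finset.single_le_sum (f := fun v => xf n s(a, v))
      (fun v _ => xf_nonneg n _) hamM
    simpa only [hxa] using h
  have hgb : (1:ℝ) ≤ ∑ v ∈ Finset.univ \ U, xf n s(b,v) := by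
    have h := Finset.single_le_sum (f := fun v => xf n s(b, v))
      (fun v _ => xf_nonneg n _) hbpM
    simpa only [hxb] using h
  by_cases hab : a = b
  · have hne2 : am ≠ bp := by
      simp only [Ne, Fin.ext_iff, ham, hbp]; omega
    have hsub : {am, bp} ⊆ Finset.univ \ U := by
      intro t ht
      rcases Finset.mem_insert.mp ht with rfl | ht
      · exact hamM
      · rw [Finset.mem_singleton.mp ht]; exact hbpM
    have h1 : ∑ v ∈ ({am, bp} : Finset (Fin n)), xf n s(a, v)
        ≤ ∑ v ∈ Finset.univ \ U, xf n s(a,v) :=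
      Finset.sum_le_sum_of_subset_of_nonneg hsub (fun v _ _ => xf_nonneg n _)
    rw [Finset.sum_pair hne2, hxa] at h1
    have hxb2 : xf n s(a, bp) = 1 := by rw [hab]; exact hxb
    rw [hxb2] at h1
    have h2 : ∑ v ∈ Finset.univ \ U, xf n s(a,v)
        ≤ ∑ u ∈ U, ∑ v ∈ Finset.univ \ U, xf n s(u,v) :=
      Finset.single_le_sum (f := fun u => ∑ v ∈ Finset.univ \ U, xf n s(u,v))
        (fun u _ => hgn u) haU
    linarith
  · have hsub : {a, b} ⊆ U := by
      intro t ht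
      rcases Finset.mem_insert.mp ht with rfl | ht
      · exact haU
      · rw [Finset.mem_singleton.mp ht]; exact hbU
    have h1 : ∑ u ∈ ({a, b} : Finset (Fin n)), (∑ v ∈ Finset.univ \ U, xf n s(u,v))
        ≤ ∑ u ∈ U, ∑ v ∈ Finset.univ \ U, xf n s(u,v) :=
      Finset.sum_le_sum_of_subset_of_nonneg hsub (fun u _ _ => hgn u)
    rw [Finset.sum_pair hab] at h1
    linarith

lemma lp_value (m : ℕ) :
    ∑ e ∈ Finset.univ.filter (fun e : Sym2 (Fin (m+1)) => ¬ Sym2.IsDiag e),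
      wf (m+1) e * xf (m+1) e = (m : ℝ) := by
  set E : Finset (Sym2 (Fin (m+1))) :=
    (Finset.univ : Finset (Fin m)).image (fun i => s((i.castSucc : Fin (m+1)), i.succ)) with hE
  have hsub : E ⊆ Finset.univ.filter (fun e : Sym2 (Fin (m+1)) => ¬ Sym2.IsDiag e) := by
    intro e he
    rw [Finset.mem_filter]
    refine ⟨Finset.mem_univ _, ?_⟩
    obtain ⟨i, _, rfl⟩ := Finset.mem_image.mp he
    simp only [Sym2.mk_isDiag_iff]
    intro h
    have := congrArg Fin.val h
    simp [Fin.val_succ] at this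
  have hzero : ∀ e ∈ Finset.univ.filter (fun e : Sym2 (Fin (m+1)) => ¬ Sym2.IsDiag e),
      e ∉ E → wf (m+1) e * xf (m+1) e = 0 := by
    intro e hef henE
    induction e using Sym2.inductionOn with
    | hf a b =>
      by_cases hx : xf (m+1) s(a,b) = 0
      · rw [hx, mul_zero]
      exfalso
      apply henE
      have hcond : (a:ℕ)+1 = (b:ℕ) ∨ (b:ℕ)+1 = (a:ℕ) := by
        by_contra hc
        exact hx (by rw [xf_mk, if_neg hc])
      rw [hE, Finset.mem_image]
      rcases hcond with h | h
      · have hav : (a:ℕ) < m := by have := b.isLt; omega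
        refine ⟨⟨(a:ℕ), hav⟩, Finset.mem_univ _, ?_⟩
        have e1 : ((⟨(a:ℕ), hav⟩ : Fin m).castSucc : Fin (m+1)) = a := by
          apply Fin.ext; simp
        have e2 : ((⟨(a:ℕ), hav⟩ : Fin m).succ : Fin (m+1)) = b := by
          apply Fin.ext; simp [Fin.val_succ, h]
        rw [e1, e2]
      · have hbv : (b:ℕ) < m := by have := a.isLt; omega
        refine ⟨⟨(b:ℕ), hbv⟩, Finset.mem_univ _, ?_⟩
        have e1 : ((⟨(b:ℕ), hbv⟩ : Fin m).castSucc : Fin (m+1)) = b := by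
          apply Fin.ext; simp
        have e2 : ((⟨(b:ℕ), hbv⟩ : Fin m).succ : Fin (m+1)) = a := by
          apply Fin.ext; simp [Fin.val_succ, h]
        rw [e1, e2, Sym2.eq_swap]
  rw [← Finset.sum_subset hsub hzero]
  have hinj : ∀ x ∈ (Finset.univ : Finset (Fin m)), ∀ y ∈ Finset.univ,
      s((x.castSucc : Fin (m+1)), x.succ) = s((y.castSucc : Fin (m+1)), y.succ) → x = y := by
    intro x _ y _ hxy
    rw [Sym2.eq_iff] at hxy
    apply Fin.ext
    rcases hxy with ⟨h1, _⟩ | ⟨h1, h2⟩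
    · have := congrArg Fin.val h1; simpa using this
    · have e1 := congrArg Fin.val h1
      have e2 := congrArg Fin.val h2
      simp [Fin.val_succ] at e1 e2
      omega
  rw [hE, Finset.sum_image hinj]
  have hterm : ∀ i : Fin m,
      wf (m+1) s((i.castSucc : Fin (m+1)), i.succ)
        * xf (m+1) s((i.castSucc : Fin (m+1)), i.succ) = 1 := by
    intro i
    rw [wf_mk, xf_mk, if_pos (by left; simp [Fin.val_succ]), mul_one]
    simp only [Fin.coe_castSucc, Fin.val_succ]
    push_cast
    rw [abs_sub_comm]
    norm_num
  rw [Finset.sum_congr rfl (fun i _ => hterm i)]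
  simp

/-! ### The integral tour lower bound -/

lemma tour_bound (l : ℕ) (T : Multiset (Sym2 (Fin (l+7))))
    (hT : IsTour ({(⟨0, by omega⟩ : Fin (l + 7)), ⟨l+6, by omega⟩} : Finset (Fin (l+7))) T) :
    2 * ((l : ℝ) + 4) ≤ mweight (wf (l+7)) T := by
  obtain ⟨hd, hdeg, hconn⟩ := hT
  have hmw := mweight_eq T hd
  have good2 : ∀ c : ℕ, (∃ e ∈ T, crossP (l+7) c e) →
      (2:ℝ) ≤ ((T.filter (crossP (l+7) c)).card : ℝ) := by
    rintro c ⟨e, he, hce⟩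
    have h1 : e ∈ T.filter (crossP (l+7) c) := Multiset.mem_filter.mpr ⟨he, hce⟩
    have h2 : 0 < Multiset.card (T.filter (crossP (l+7) c)) :=
      Multiset.card_pos.mpr (fun h0 => by simp [h0] at h1)
    obtain ⟨k, hk⟩ := cross_even T hd hdeg c
    have : 2 ≤ Multiset.card (T.filter (crossP (l+7) c)) := by omega
    exact_mod_cast this
  obtain ⟨G, hGsub, hGgood, hGcard⟩ :
      ∃ G : Finset ℕ, G ⊆ Finset.range (l+6) ∧
        (∀ c ∈ G, ∃ e ∈ T, crossP (l+7) c e) ∧ l+4 ≤ G.card := by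
    by_cases hall : ∀ c ∈ Finset.Icc 1 (l+4), ∃ e ∈ T, crossP (l+7) c e
    · refine ⟨Finset.Icc 1 (l+4), ?_, hall, ?_⟩
      · intro c hc; rw [Finset.mem_range]; rw [Finset.mem_Icc] at hc; omega
      · rw [Nat.card_Icc]; omega
    · push_neg at hall
      obtain ⟨c0, hc0mem, hc0bad⟩ := hall
      rw [Finset.mem_Icc] at hc0mem
      obtain ⟨d, hdD, hcond⟩ := hconn ⟨c0, by omega⟩
      have hd0 : d = (⟨0, by omega⟩ : Fin (l+7)) := by
        rcases Finset.mem_insert.mp hdD with h | h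
        · exact h
        · exfalso
          rw [Finset.mem_singleton] at h
          subst h
          obtain ⟨e, he, hce⟩ := cross_of_connects T hcond (le_refl c0) (by simp; omega)
          exact hc0bad e he hce
      subst hd0
      obtain ⟨d', hdD', hcond'⟩ := hconn ⟨c0+1, by omega⟩
      have hd1 : d' = (⟨l+6, by omega⟩ : Fin (l+7)) := by
        rcases Finset.mem_insert.mp hdD' with h | h
        · exfalso
          subst h
          obtain ⟨e, he, hce⟩ :=
            cross_of_connects T (c := c0) (connects_symm T hcond') (by simp) (by simp)
          exact hc0bad e he hce
        · rwa [Finset.mem_singleton] at h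
      subst hd1
      refine ⟨(Finset.range (l+6)).erase c0, Finset.erase_subset _ _, ?_, ?_⟩
      · intro c hc
        obtain ⟨hne, hmem⟩ := Finset.mem_erase.mp hc
        rw [Finset.mem_range] at hmem
        rcases Nat.lt_or_ge c c0 with h | h
        · exact cross_of_connects T (connects_symm T hcond) (by simp) (by simpa using h)
        · have hlt : c0 < c := by omega
          exact cross_of_connects T hcond' (by simpa using hlt) (by simpa using hmem)
      · rw [Finset.card_erase_of_mem (Finset.mem_range.mpr (by omega)), Finset.card_range]
        omega
  rw [hmw]
  have hstep1 : (2:ℝ) * ((l:ℝ) + 4) ≤ ∑ c ∈ G, ((T.filter (crossP (l+7) c)).card : ℝ) := by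
    have h2 : ∑ c ∈ G, (2:ℝ) ≤ ∑ c ∈ G, ((T.filter (crossP (l+7) c)).card : ℝ) :=
      Finset.sum_le_sum (fun c hc => good2 c (hGgood c hc))
    rw [Finset.sum_const, nsmul_eq_mul] at h2
    have h3 : ((l:ℝ) + 4) ≤ (G.card : ℝ) := by
      have : ((l + 4 : ℕ) : ℝ) ≤ (G.card : ℝ) := by exact_mod_cast hGcard
      push_cast at this; linarith
    linarith
  have hstep2 : ∑ c ∈ G, ((T.filter (crossP (l+7) c)).card : ℝ)
      ≤ ∑ c ∈ Finset.range (l+7-1), ((T.filter (crossP (l+7) c)).card : ℝ) := by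
    apply Finset.sum_le_sum_of_subset_of_nonneg
    · intro c hc; exact hGsub hc
    · intro c _ _; positivity
  linarith

theorem stmt17 : ∀ l : ℕ, ∃ (n : ℕ) (D : Finset (Fin n)) (w : Sym2 (Fin n) → ℝ)
    (x : Sym2 (Fin n) → ℝ),
    IsMetric w ∧ D.Nonempty ∧
    (∀ e, 0 ≤ x e ∧ x e ≤ 2) ∧
    (∀ v ∉ D, ∑ u ∈ Finset.univ.erase v, x s(v, u) = 2) ∧
    (∀ U : Finset (Fin n), U.Nonempty → (∀ u ∈ U, u ∉ D) →
      2 ≤ ∑ u ∈ U, ∑ v ∈ Finset.univ \ U, x s(u, v)) ∧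
    (∑ e ∈ Finset.univ.filter (fun e : Sym2 (Fin n) => ¬ Sym2.IsDiag e), w e * x e ≤
      (l : ℝ) + 6) ∧
    (∀ T, IsTour D T → 2 * ((l : ℝ) + 4) ≤ mweight w T) := by
  intro l
  refine ⟨l + 7, {(⟨0, by omega⟩ : Fin (l + 7)), ⟨l + 6, by omega⟩}, wf (l + 7), xf (l + 7),
    wf_metric _, ⟨_, Finset.mem_insert_self _ _⟩,
    fun e => ⟨xf_nonneg _ e, xf_le _ e⟩, ?_, ?_, ?_, ?_⟩
  · intro v hv
    rw [Finset.mem_insert, Finset.mem_singleton] at hv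
    push_neg at hv
    obtain ⟨hv1, hv2⟩ := hv
    have hv1' : (v:ℕ) ≠ 0 := fun h => hv1 (Fin.ext h)
    have hv2' : (v:ℕ) ≠ l + 6 := fun h => hv2 (Fin.ext h)
    have := v.isLt
    exact deg_sum v (by omega) (by omega)
  · intro U hne hU
    refine cut_bound U hne ?_
    intro u hu
    have h := hU u hu
    rw [Finset.mem_insert, Finset.mem_singleton] at h
    push_neg at h
    obtain ⟨h1, h2⟩ := h
    have h1' : (u:ℕ) ≠ 0 := fun h => h1 (Fin.ext h)
    have h2' : (u:ℕ) ≠ l + 6 := fun h => h2 (Fin.ext h)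
    have := u.isLt
    omega
  · have h : ∑ e ∈ Finset.univ.filter (fun e : Sym2 (Fin (l + 7)) => ¬ Sym2.IsDiag e),
        wf (l + 7) e * xf (l + 7) e = ((l + 6 : ℕ) : ℝ) := lp_value (l + 6)
    rw [h]
    push_cast
    linarith
  · intro T hT
    exact tour_bound l T hT
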